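/- Let f : X → X be a pointwise periodic homeomorphism of a compact metric space. If A ∈ 2^X and B ∈ 2^X is uniformly recurrent for 2^f, and the pair (A, B) is proximal under 2^f (i.e. liminf_n d_H(f^n(A), f^n(B)) = 0), then A ⊆ B. -/

import Mathlib

open TopologicalSpace Metric Set Filter

/-- The induced map on the hyperspace of nonempty compact (= closed) subsets. -/
noncomputable def hyper {X : Type*} [MetricSpace X] (f : X ≃ₜ X) :
    NonemptyCompacts X → NonemptyCompacts X :=
  fun A => ⟨⟨f '' A, A.isCompact.image f.continuous⟩, A.nonempty.image f⟩

/-- `x` is uniformly recurrent for `g`. -/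
def IsUnifRec {α : Type*} [MetricSpace α] (g : α → α) (x : α) : Prop :=
  ∀ ε > (0:ℝ), ∃ N > 0, ∀ k : ℕ, dist (g^[k * N] x) x < ε

/-- `x` is recurrent for `g` (it belongs to its own ω-limit set). -/
def IsRec {α : Type*} [MetricSpace α] (g : α → α) (x : α) : Prop :=
  ∀ ε > (0:ℝ), ∀ m : ℕ, ∃ n ≥ m, 0 < n ∧ dist (g^[n] x) x < ε

/-- `x` is almost periodic for `g`. -/
def IsAP {α : Type*} [MetricSpace α] (g : α → α) (x : α) : Prop :=
  ∀ ε > (0:ℝ), ∃ N : ℕ, ∀ n : ℕ, ∃ i < N, dist (g^[n + i] x) x < ε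

/-- `(x, y)` is an asymptotic pair for `g`. -/
def Asymp {α : Type*} [MetricSpace α] (g : α → α) (x y : α) : Prop :=
  Filter.Tendsto (fun n => dist (g^[n] x) (g^[n] y)) Filter.atTop (nhds 0)

/-- `(x, y)` is a proximal pair for `g`. -/
def Proximal {α : Type*} [MetricSpace α] (g : α → α) (x y : α) : Prop :=
  ∀ ε > (0:ℝ), ∀ m : ℕ, ∃ n ≥ m, dist (g^[n] x) (g^[n] y) < ε

/-- The ω-limit set of `x` under `g`. -/
def omegaSet {α : Type*} [MetricSpace α] (g : α → α) (x : α) : Set α :=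
  {y | ∀ ε > (0:ℝ), ∀ m : ℕ, ∃ n ≥ m, dist (g^[n] x) y < ε}

/-- `M` is a minimal set of `g`. -/
def IsMinimalFor {α : Type*} [TopologicalSpace α] (g : α → α) (M : Set α) : Prop :=
  M.Nonempty ∧ IsClosed M ∧ Set.MapsTo g M M ∧
    ∀ M' ⊆ M, M'.Nonempty → IsClosed M' → Set.MapsTo g M' M' → M' = M

/-- `A` is internally chain transitive for `g`. -/
def ICT {α : Type*} [MetricSpace α] (g : α → α) (A : Set α) : Prop :=
  ∀ a ∈ A, ∀ b ∈ A, ∀ ε > (0:ℝ), ∃ N : ℕ, 1 ≤ N ∧ ∃ c : ℕ → α,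
    c 0 = a ∧ c N = b ∧ (∀ i ≤ N, c i ∈ A) ∧ ∀ i < N, dist (g (c i)) (c (i + 1)) < ε

/-!
Let `x ∈ A` have period `p`, and let `N` be a return time of `B` up to `ε`. Proximality of `A`
and `B` survives restriction to times that are multiples of `p * N`, because the first `p * N`
iterates of the uniformly continuous map `2^f` are uniformly equicontinuous. At such a time `M`
the point `x = f^M x ∈ f^M(A)` is close to `f^M(B)`, which is itself close to `B`.
-/

theorem UniformContinuous.exists_forall_dist_iterate_lt {α : Type*} [PseudoMetricSpace α]
    {g : α → α} (hg : UniformContinuous g) (K : ℕ) {ε : ℝ} (hε : 0 < ε) :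
    ∃ δ > 0, ∀ a b, dist a b < δ → ∀ j ≤ K, dist (g^[j] a) (g^[j] b) < ε := by
  have hequi : UniformEquicontinuous fun j : Fin (K + 1) => g^[j] :=
    uniformEquicontinuous_finite.2 fun j => hg.iterate g j
  obtain ⟨δ, hδ, h⟩ := Metric.uniformEquicontinuous_iff.1 hequi ε hε
  exact ⟨δ, hδ, fun a b hab j hj => h a b hab ⟨j, Nat.lt_succ_of_le hj⟩⟩

theorem Proximal.iterate {α : Type*} [MetricSpace α] {g : α → α} (hg : UniformContinuous g)
    {x y : α} (h : Proximal g x y) {K : ℕ} (hK : 0 < K) : Proximal g^[K] x y := by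
  intro ε hε m
  obtain ⟨δ, hδ, hequi⟩ := hg.exists_forall_dist_iterate_lt K hε
  obtain ⟨n, hn, hxy⟩ := h δ hδ (K * m)
  have hdiv : K * (n / K) + n % K = n := Nat.div_add_mod n K
  have hmod : n % K < K := Nat.mod_lt n hK
  have hm : m ≤ n / K := (Nat.le_div_iff_mul_le hK).2 (by linarith)
  -- the first multiple of `K` after `n` is reached from `n` in at most `K` steps
  refine ⟨n / K + 1, by omega, ?_⟩
  have hshift : K * (n / K + 1) = (K * (n / K + 1) - n) + n := by rw [mul_add]; omega
  rw [← Function.iterate_mul, hshift, Function.iterate_add_apply, Function.iterate_add_apply]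
  exact hequi _ _ hxy _ (by rw [mul_add]; omega)

theorem TopologicalSpace.NonemptyCompacts.exists_dist_lt_of_dist_lt {X : Type*}
    [MetricSpace X] {A B : NonemptyCompacts X} {x : X} (hx : x ∈ A) {r : ℝ}
    (h : dist A B < r) : ∃ y ∈ B, dist x y < r :=
  Metric.exists_dist_lt_of_hausdorffDist_lt hx (by rwa [← NonemptyCompacts.dist_eq])
    (edist_ne_top A B)

section Hyperspace

variable {X : Type*} [MetricSpace X]

theorem coe_hyper_iterate (f : X ≃ₜ X) (A : NonemptyCompacts X) (n : ℕ) :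
    (((hyper f)^[n] A : NonemptyCompacts X) : Set X) = (⇑f)^[n] '' A := by
  induction n with
  | zero => simp
  | succ n ih =>
    rw [Function.iterate_succ_apply', Function.iterate_succ', Set.image_comp, ← ih]
    rfl

theorem uniformContinuous_hyper [CompactSpace X] (f : X ≃ₜ X) :
    UniformContinuous (hyper f) := by
  refine Metric.uniformContinuous_iff.2 fun ε hε => ?_
  obtain ⟨δ, hδ, hf⟩ := Metric.uniformContinuous_iff.1
    (CompactSpace.uniformContinuous_of_continuous f.continuous) (ε / 2) (half_pos hε)
  refine ⟨δ, hδ, fun {A B} hAB => ?_⟩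
  have hclose : ∀ {C D : NonemptyCompacts X}, dist C D < δ →
      ∀ u ∈ f '' (C : Set X), ∃ v ∈ f '' (D : Set X), dist u v ≤ ε / 2 := by
    rintro C D hCD _ ⟨c, hc, rfl⟩
    obtain ⟨d, hd, hcd⟩ := NonemptyCompacts.exists_dist_lt_of_dist_lt hc hCD
    exact ⟨f d, Set.mem_image_of_mem f hd, (hf hcd).le⟩
  calc dist (hyper f A) (hyper f B)
      ≤ ε / 2 := by
        rw [NonemptyCompacts.dist_eq]
        exact Metric.hausdorffDist_le_of_mem_dist (half_pos hε).le
          (hclose hAB) (hclose (dist_comm A B ▸ hAB))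
    _ < ε := half_lt_self hε

end Hyperspace

theorem stmt13 {X : Type*} [MetricSpace X] [CompactSpace X]
    (f : X ≃ₜ X) (hper : ∀ x : X, ∃ n > 0, (⇑f)^[n] x = x)
    (A B : NonemptyCompacts X)
    (hB : IsUnifRec (hyper f) B) (hprox : Proximal (hyper f) A B) :
    (A : Set X) ⊆ (B : Set X) := by
  intro x hx
  rw [← B.isCompact.isClosed.closure_eq, Metric.mem_closure_iff]
  intro ε hε
  obtain ⟨p, hp, hpx⟩ := hper x
  obtain ⟨N, hN, hBN⟩ := hB (ε / 2) (half_pos hε)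
  obtain ⟨m, -, hAB⟩ := hprox.iterate (uniformContinuous_hyper f) (Nat.mul_pos hp hN)
    (ε / 2) (half_pos hε) 0
  rw [← Function.iterate_mul] at hAB
  have hxM : x ∈ ((hyper f)^[p * N * m] A : Set X) := by
    rw [coe_hyper_iterate, mul_assoc, Function.iterate_mul]
    exact ⟨x, hx, Function.iterate_fixed hpx _⟩
  obtain ⟨y, hy, hxy⟩ := NonemptyCompacts.exists_dist_lt_of_dist_lt hxM hAB
  obtain ⟨z, hz, hyz⟩ := NonemptyCompacts.exists_dist_lt_of_dist_lt hy
    (by rw [show p * N * m = p * m * N by ring]; exact hBN (p * m))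
  exact ⟨z, hz, by linarith [dist_triangle x y z]⟩
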